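/- Let G be obtained from G' by subdividing one edge, introducing a new vertex u between v and w. If S is a scramble in G, and S' is obtained by replacing each egg E of S by E ∪ {u} when v ∈ E and by E otherwise, then the scramble order of S' in G' is at least the scramble order of S in G. -/

import Mathlib

/-- A finite multigraph on vertex set `V`: `mul u v` is the number of
parallel edges between `u` and `v`; there are no loops. -/
structure Multigraph (V : Type) where
  mul : V → V → ℕ
  symm : ∀ u v, mul u v = mul v u
  loopless : ∀ v, mul v v = 0

namespace Multigraph

variable {V : Type}

/-- Adjacency in a multigraph. -/
def Adj (G : Multigraph V) (u v : V) : Prop := 0 < G.mul u v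

/-- The underlying simple graph of a multigraph. -/
def simple (G : Multigraph V) : SimpleGraph V where
  Adj u v := 0 < G.mul u v
  symm := ⟨fun u v h => by simpa [G.symm u v] using h⟩
  loopless := ⟨fun v h => by simp [G.loopless] at h⟩

/-- A multigraph is connected if its underlying simple graph is. -/
def Connected (G : Multigraph V) : Prop := G.simple.Connected

/-- A (nonempty) connected subset of the vertices of a multigraph. -/
def ConnSubset (G : Multigraph V) (B : Finset V) : Prop :=
  B.Nonempty ∧ (SimpleGraph.induce (B : Set V) G.simple).Connected

variable [Fintype V] [DecidableEq V]

/-- The number of edges between `A` and its complement. -/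
def cut (G : Multigraph V) (A : Finset V) : ℕ :=
  ∑ u ∈ A, ∑ v ∈ Aᶜ, G.mul u v

/-- A scramble: a collection of eggs, each a nonempty connected vertex subset. -/
def IsScramble (G : Multigraph V) (S : Finset (Finset V)) : Prop :=
  ∀ E ∈ S, G.ConnSubset E

/-- A hitting set for a scramble: a set of vertices meeting every egg. -/
def IsHitting (S : Finset (Finset V)) (C : Finset V) : Prop :=
  ∀ E ∈ S, (E ∩ C).Nonempty

/-- `k` is a valid order for the scramble `S` if no hitting set has fewer than `k`
vertices, and every vertex set `A` containing an egg, with an egg in its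
complement, has at least `k` crossing edges. -/
def ValidOrder (G : Multigraph V) (S : Finset (Finset V)) (k : ℕ) : Prop :=
  (∀ C : Finset V, IsHitting S C → k ≤ C.card) ∧
  (∀ A : Finset V, (∃ E ∈ S, E ⊆ A) → (∃ E' ∈ S, E' ⊆ Aᶜ) → k ≤ G.cut A)

/-- The scramble order `‖S‖`: the largest valid order. -/
noncomputable def scrambleOrder (G : Multigraph V) (S : Finset (Finset V)) : ℕ :=
  sSup {k | ValidOrder G S k}

/-- The scramble number of a multigraph: the maximum scramble order of a scramble. -/
noncomputable def scrambleNumber (G : Multigraph V) : ℕ :=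
  sSup {n | ∃ S, IsScramble G S ∧ scrambleOrder G S = n}

end Multigraph

namespace Multigraph

/-- The edge-subdivision of `G` at one edge between `v` and `w`: a new vertex
`none` is introduced in the middle of one of the edges between `v` and `w`. -/
def subdivideEdge {V : Type} [DecidableEq V] (G : Multigraph V) (v w : V) :
    Multigraph (Option V) where
  mul a b :=
    match a, b with
    | some a, some b => G.mul a b - (if s(a, b) = s(v, w) then 1 else 0)
    | none, some a => if a = v ∨ a = w then 1 else 0
    | some a, none => if a = v ∨ a = w then 1 else 0
    | none, none => 0
  symm := by
    rintro (_ | a) (_ | b)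
    · rfl
    · rfl
    · rfl
    · show G.mul a b - _ = G.mul b a - _
      rw [G.symm a b, Sym2.eq_swap]
  loopless := by
    rintro (_ | a)
    · rfl
    · show G.mul a a - _ = 0
      simp [G.loopless]

end Multigraph

/-- A multigraph bundled with its (finite, decidable) vertex type. -/
structure MG where
  V : Type
  [fin : Fintype V]
  [dec : DecidableEq V]
  G : Multigraph V

namespace MG

/-- The scramble number of a bundled multigraph. -/
noncomputable def sn (H : MG) : ℕ :=
  @Multigraph.scrambleNumber H.V H.fin H.dec H.G

/-- `H'` is obtained from `H` by a single edge-subdivision. -/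
def EdgeSubdiv (H H' : MG) : Prop :=
  letI := H.dec
  ∃ v w : H.V, H.G.Adj v w ∧
    ∃ e : H'.V ≃ Option H.V,
      ∀ a b : H'.V, H'.G.mul a b = (Multigraph.subdivideEdge H.G v w).mul (e a) (e b)

/-- `H'` is a subdivision of `H`: obtained by finitely many edge-subdivisions. -/
def IsSubdivision : MG → MG → Prop := Relation.ReflTransGen EdgeSubdiv

end MG

/-!
Project every vertex set `A'` of the subdivided graph `G'` back to `A = A' ∩ V`. Hitting sets
project to hitting sets (send `u` to `v`, which lies in every egg that `u` was added to), and an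
egg of `S'` inside `A'` (or its complement) comes from an egg of `S` inside `A` (or its
complement). Every edge of `G` crossing `A` still crosses `A'` in `G'`, except possibly the
subdivided edge `vw`; but if `vw` crosses `A`, one of the two halves `vu`, `uw` crosses `A'`.
So every valid order for `S` is one for `S'`.
-/

open Finset

lemma Sym2.sum_ite_mk_eq_le {α : Type*} [DecidableEq α] (s : Finset α) (b : α) (z : Sym2 α) :
    (∑ a ∈ s, if s(a, b) = z then 1 else 0 : ℕ) ≤ if b ∈ z then 1 else 0 := by
  rw [sum_boole, Nat.cast_id]
  split_ifs with hb
  · refine card_le_one.2 fun a ha a' ha' => ?_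
    exact Sym2.congr_left.1 ((mem_filter.1 ha).2.trans (mem_filter.1 ha').2.symm)
  · refine (card_eq_zero.2 (filter_eq_empty_iff.2 fun a _ h => hb ?_)).le
    exact h ▸ Sym2.mem_mk_right a b

lemma Finset.compl_insertNone {α : Type*} [Fintype α] [DecidableEq α] (s : Finset α) :
    (insertNone s)ᶜ = sᶜ.map Function.Embedding.some := by
  ext (_ | x) <;> simp

lemma Finset.eraseNone_compl {α : Type*} [Fintype α] [DecidableEq α] (s : Finset (Option α)) :
    eraseNone sᶜ = (eraseNone s)ᶜ := by
  ext x; simp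

namespace Multigraph

variable {V : Type} [DecidableEq V]

@[simp]
lemma subdivideEdge_mul_some_some (G : Multigraph V) (v w a b : V) :
    (G.subdivideEdge v w).mul (some a) (some b) =
      G.mul a b - if s(a, b) = s(v, w) then 1 else 0 :=
  rfl

@[simp]
lemma subdivideEdge_mul_none_some (G : Multigraph V) (v w b : V) :
    (G.subdivideEdge v w).mul none (some b) = if b = v ∨ b = w then 1 else 0 :=
  rfl

def liftEgg (v : V) (E : Finset V) : Finset (Option V) :=
  if v ∈ E then insert none (E.image some) else E.image some

lemma some_mem_liftEgg {v a : V} {E : Finset V} : some a ∈ liftEgg v E ↔ a ∈ E := by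
  unfold liftEgg; split_ifs <;> simp

lemma getD_mem_of_mem_liftEgg {v : V} {E : Finset V} {x : Option V} (hx : x ∈ liftEgg v E) :
    x.getD v ∈ E := by
  unfold liftEgg at hx
  split_ifs at hx <;> rcases x with _ | a <;> simp_all

lemma subset_eraseNone_of_liftEgg_subset {v : V} {E : Finset V} {X : Finset (Option V)}
    (h : liftEgg v E ⊆ X) : E ⊆ eraseNone X :=
  fun _ ha => mem_eraseNone.2 (h (some_mem_liftEgg.2 ha))

lemma IsHitting.image_getD {S : Finset (Finset V)} {C : Finset (Option V)} {v : V}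
    (h : IsHitting (S.image (liftEgg v)) C) : IsHitting S (C.image (Option.getD · v)) := by
  intro E hE
  obtain ⟨x, hx⟩ := h _ (mem_image_of_mem _ hE)
  rw [mem_inter] at hx
  exact ⟨x.getD v, mem_inter.2 ⟨getD_mem_of_mem_liftEgg hx.1, mem_image_of_mem _ hx.2⟩⟩

variable [Fintype V]

lemma cut_compl (G : Multigraph V) (A : Finset V) : G.cut Aᶜ = G.cut A := by
  rw [cut, cut, compl_compl, sum_comm]
  exact sum_congr rfl fun _ _ => sum_congr rfl fun _ _ => G.symm _ _

lemma cut_insertNone {H : Multigraph (Option V)} (A : Finset V) :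
    H.cut (insertNone A) =
      ∑ b ∈ Aᶜ, H.mul none (some b) + ∑ a ∈ A, ∑ b ∈ Aᶜ, H.mul (some a) (some b) := by
  simp only [cut, compl_insertNone, sum_insertNone, sum_map, Function.Embedding.some_apply]

lemma cut_le_cut_subdivideEdge_insertNone (G : Multigraph V) (v w : V) (A : Finset V) :
    G.cut A ≤ (G.subdivideEdge v w).cut (insertNone A) := by
  set δ : V → V → ℕ := fun a b => if s(a, b) = s(v, w) then 1 else 0
  calc G.cut A
      ≤ ∑ a ∈ A, ∑ b ∈ Aᶜ, ((G.mul a b - δ a b) + δ a b) :=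
        sum_le_sum fun _ _ => sum_le_sum fun _ _ => le_tsub_add
    _ = ∑ a ∈ A, ∑ b ∈ Aᶜ, (G.mul a b - δ a b) + ∑ b ∈ Aᶜ, ∑ a ∈ A, δ a b := by
        simp only [sum_add_distrib, sum_comm (s := A)]
    -- the subdivided edge is counted at most once, at its endpoint outside `A`
    _ ≤ ∑ a ∈ A, ∑ b ∈ Aᶜ, (G.mul a b - δ a b) + ∑ b ∈ Aᶜ, if b ∈ s(v, w) then 1 else 0 := by
        gcongr with b
        exact Sym2.sum_ite_mk_eq_le A b s(v, w)
    _ = (G.subdivideEdge v w).cut (insertNone A) := by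
        simp only [cut_insertNone, subdivideEdge_mul_some_some, subdivideEdge_mul_none_some,
          Sym2.mem_iff, δ, add_comm]

lemma cut_eraseNone_le_cut_subdivideEdge (G : Multigraph V) (v w : V) (A' : Finset (Option V)) :
    G.cut (eraseNone A') ≤ (G.subdivideEdge v w).cut A' := by
  have key : ∀ B : Finset (Option V), none ∈ B →
      G.cut (eraseNone B) ≤ (G.subdivideEdge v w).cut B := fun B hB => by
    simpa [insert_eq_of_mem hB] using cut_le_cut_subdivideEdge_insertNone G v w (eraseNone B)
  by_cases h : none ∈ A'
  · exact key A' h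
  · simpa only [eraseNone_compl, cut_compl] using key A'ᶜ (mem_compl.2 h)

lemma validOrder_zero (G : Multigraph V) (S : Finset (Finset V)) : ValidOrder G S 0 :=
  ⟨fun _ _ => Nat.zero_le _, fun _ _ _ => Nat.zero_le _⟩

lemma ValidOrder.le_card {G : Multigraph V} {S : Finset (Finset V)} {k : ℕ}
    (h : ValidOrder G S k) : k ≤ Fintype.card V := by
  by_cases h0 : ∅ ∈ S
  · -- an empty egg lies on both sides of the empty cut
    have := h.2 ∅ ⟨∅, h0, Subset.rfl⟩ ⟨∅, h0, empty_subset _⟩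
    simp only [cut, sum_empty, nonpos_iff_eq_zero] at this
    omega
  · refine h.1 univ fun E hE => ?_
    rw [inter_univ]
    exact nonempty_iff_ne_empty.2 (ne_of_mem_of_not_mem hE h0)

lemma ValidOrder.subdivideEdge {G : Multigraph V} {S : Finset (Finset V)} {k : ℕ}
    (h : ValidOrder G S k) (v w : V) :
    ValidOrder (G.subdivideEdge v w) (S.image (liftEgg v)) k := by
  refine ⟨fun C hC => (h.1 _ hC.image_getD).trans card_image_le, ?_⟩
  rintro A ⟨_, hE, hEA⟩ ⟨_, hE', hEA'⟩
  obtain ⟨E, hES, rfl⟩ := mem_image.1 hE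
  obtain ⟨E', hE'S, rfl⟩ := mem_image.1 hE'
  have hE'A : E' ⊆ (eraseNone A)ᶜ := eraseNone_compl A ▸ subset_eraseNone_of_liftEgg_subset hEA'
  exact (h.2 _ ⟨E, hES, subset_eraseNone_of_liftEgg_subset hEA⟩ ⟨E', hE'S, hE'A⟩).trans
    (cut_eraseNone_le_cut_subdivideEdge G v w A)

lemma scrambleOrder_le_scrambleOrder {W : Type} [Fintype W] [DecidableEq W]
    {G : Multigraph V} {H : Multigraph W} {S : Finset (Finset V)} {T : Finset (Finset W)}
    (h : ∀ k, ValidOrder G S k → ValidOrder H T k) : scrambleOrder G S ≤ scrambleOrder H T :=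
  csSup_le_csSup ⟨_, fun _ hk => hk.le_card⟩ ⟨0, validOrder_zero G S⟩ h

end Multigraph

open Multigraph in
theorem scrambleOrder_le_subdivide_general {V : Type} [Fintype V] [DecidableEq V]
    (G : Multigraph V) (v w : V)
    (S : Finset (Finset V)) :
    scrambleOrder G S ≤
      scrambleOrder (subdivideEdge G v w)
        (S.image fun E =>
          if v ∈ E then insert (none : Option V) (E.image some) else E.image some) :=
  scrambleOrder_le_scrambleOrder fun _ hk => hk.subdivideEdge v w

open Multigraph in
/-- Let `G'` be obtained from `G` by subdividing one edge between `v` and `w`,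
introducing a new vertex `u` (here `none`).  If `S` is a scramble in `G` and `S'`
is obtained by replacing each egg `E` by `E ∪ {u}` when `v ∈ E` and by `E`
otherwise, then the scramble order of `S'` in `G'` is at least that of `S` in `G`. -/
theorem scrambleOrder_le_subdivide {V : Type} [Fintype V] [DecidableEq V]
    (G : Multigraph V) (hG : G.Connected) (v w : V) (hvw : G.Adj v w)
    (S : Finset (Finset V)) (hS : IsScramble G S) :
    scrambleOrder G S ≤
      scrambleOrder (subdivideEdge G v w)
        (S.image fun E =>
          if v ∈ E then insert (none : Option V) (E.image some) else E.image some) :=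
  scrambleOrder_le_subdivide_general G v w S
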